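/- Let [a] ∈ Λ₁ with Supp(a) = {k} and [b] ∈ Λ₃. Then mult(a,b) = 3, and Λ(a,b) consists of exactly one class [c] ∈ Λ₃, namely the class of the vector c with cⱼ = bⱼ for all j ≠ k and cₖ = −bₖ. -/
import Mathlib


open Complex

noncomputable section

namespace G31

/-- Vectors `a = (a₁,a₂,a₃,a₄) ∈ ℂ⁴`. -/
abbrev V : Type := Fin 4 → ℂ

/-- `μ₄ ⊂ ℂ`, the group of fourth roots of unity `{1, i, -1, -i}`. -/
def mu4 : Set ℂ := {z : ℂ | z ^ 4 = 1}

/-- `Ψ = μ₄ ∪ {0}`. -/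
def Psi : Set ℂ := insert 0 mu4

/-- `a ∈ Ψ⁴`. -/
def PsiV (a : V) : Prop := ∀ k, a k ∈ Psi

/-- The diagonal multiplicative action of `μ₄` on `ℂ⁴`: `a ~ b` iff `b = ξ • a` for some
`ξ ∈ μ₄`. -/
def rel (a b : V) : Prop := ∃ ξ : ℂ, ξ ^ 4 = 1 ∧ b = ξ • a

theorem rel_refl (a : V) : rel a a := ⟨1, by norm_num, by simp⟩

theorem rel_symm {a b : V} (h : rel a b) : rel b a := by
  obtain ⟨ξ, hξ, rfl⟩ := h
  refine ⟨ξ ^ 3, by rw [show (ξ ^ 3) ^ 4 = (ξ ^ 4) ^ 3 by ring, hξ, one_pow], ?_⟩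
  rw [smul_smul, show ξ ^ 3 * ξ = ξ ^ 4 by ring, hξ, one_smul]

theorem rel_trans {a b c : V} (h : rel a b) (h' : rel b c) : rel a c := by
  obtain ⟨ξ, hξ, rfl⟩ := h
  obtain ⟨η, hη, rfl⟩ := h'
  exact ⟨η * ξ, by rw [mul_pow, hξ, hη, one_mul], by rw [smul_smul]⟩

/-- The setoid on `ℂ⁴` given by the diagonal `μ₄`-action. -/
def phiSetoid : Setoid V := ⟨rel, rel_refl, rel_symm, rel_trans⟩

/-- `Φ`, the quotient of `Ψ⁴` (here of `ℂ⁴`) by the diagonal `μ₄`-action. -/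
def Phi : Type := Quotient phiSetoid

/-- The class `[a] ∈ Φ` of `a`. -/
def cls (a : V) : Phi := Quotient.mk phiSetoid a

/-- `Supp a = {k : aₖ ≠ 0}`. -/
def Supp (a : V) : Set (Fin 4) := {k | a k ≠ 0}

/-- `prod a = a₁a₂a₃a₄`. -/
def prod4 (a : V) : ℂ := ∏ k, a k

/-- The hyperplane `X_a = {x : ∑ aₖ xₖ = 0} ⊂ ℂ⁴`. -/
def Xa (a : V) : Set V := {x | ∑ k, a k * x k = 0}

/-- The support of a class `[a] ∈ Φ` (independent of the representative). -/
def SuppC (c : Phi) : Set (Fin 4) := {k | ∃ a : V, cls a = c ∧ a k ≠ 0}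

/-- `Λ₁ = {[a] : a ∈ Ψ⁴, |Supp a| = 1}`. -/
def Lambda1 : Set Phi := {c | ∃ a : V, cls a = c ∧ PsiV a ∧ (Supp a).ncard = 1}

/-- `Λ₂ = {[a] : a ∈ Ψ⁴, |Supp a| = 2}`. -/
def Lambda2 : Set Phi := {c | ∃ a : V, cls a = c ∧ PsiV a ∧ (Supp a).ncard = 2}

/-- `Λ₃ = {[a] : a ∈ Ψ⁴, |Supp a| = 4, prod a = ±1}`. -/
def Lambda3 : Set Phi :=
  {c | ∃ a : V, cls a = c ∧ PsiV a ∧ (Supp a).ncard = 4 ∧ (prod4 a = 1 ∨ prod4 a = -1)}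

/-- `Λ = Λ₁ ⊔ Λ₂ ⊔ Λ₃`, the hyperplanes of the reflection arrangement of type `G₃₁`. -/
def Lambda : Set Phi := Lambda1 ∪ Lambda2 ∪ Lambda3

/-- `Λ̂(a,b) = {[c] ∈ Λ : X_c ⊇ X_a ∩ X_b}` (all notions independent of representatives). -/
def LambdaHat (A B : Phi) : Set Phi :=
  {c | c ∈ Lambda ∧ ∃ xa xb xc : V, cls xa = A ∧ cls xb = B ∧ cls xc = c ∧
    Xa xa ∩ Xa xb ⊆ Xa xc}

/-- `mult(a,b) = |Λ̂(a,b)|`. -/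
def mult (A B : Phi) : ℕ := (LambdaHat A B).ncard

/-- `Λ(a,b) = Λ̂(a,b) \ {[a],[b]}`. -/
def LambdaAB (A B : Phi) : Set Phi := LambdaHat A B \ {A, B}

/-- `Λ_{j'}^m(a) = {[b] ∈ Λ_{j'} : [b] ≠ [a], mult(a,b) = m}`, where `S` stands for `Λ_{j'}`. -/
def LambdaPow (S : Set Phi) (m : ℕ) (A : Phi) : Set Phi :=
  {B | B ∈ S ∧ B ≠ A ∧ mult A B = m}

/-- `diff([a],[b]) = min_ξ |Supp (ξ a − b)|`, the minimum over representatives. -/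
def diffC (A B : Phi) : ℕ :=
  sInf {n | ∃ a b : V, cls a = A ∧ cls b = B ∧ (Supp (a - b)).ncard = n}

end G31
namespace G31


lemma mem_Psi {z : ℂ} : z ∈ Psi ↔ z = 0 ∨ z ^ 4 = 1 := by simp [Psi, mu4]

lemma mu4_ne_zero {ξ : ℂ} (h : ξ ^ 4 = 1) : ξ ≠ 0 := by
  intro h0; rw [h0] at h; norm_num at h

lemma Supp_rel {x y : V} (h : rel x y) : Supp y = Supp x := by
  obtain ⟨ξ, hξ, rfl⟩ := h
  ext j
  simp only [Supp, Set.mem_setOf_eq, Pi.smul_apply, smul_eq_mul, mul_ne_zero_iff]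
  exact ⟨fun h => h.2, fun h => ⟨mu4_ne_zero hξ, h⟩⟩

lemma Xa_rel {x y : V} (h : rel x y) : Xa y = Xa x := by
  obtain ⟨ξ, hξ, rfl⟩ := h
  ext v
  simp only [Xa, Set.mem_setOf_eq, Pi.smul_apply, smul_eq_mul, mul_assoc, ← Finset.mul_sum,
    mul_eq_zero, mu4_ne_zero hξ, false_or]

lemma PsiV_rel {x y : V} (h : rel x y) (hx : PsiV x) : PsiV y := by
  obtain ⟨ξ, hξ, rfl⟩ := h
  intro j
  rcases mem_Psi.mp (hx j) with h0 | h1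
  · exact mem_Psi.mpr (Or.inl (by simp [h0]))
  · exact mem_Psi.mpr (Or.inr (by rw [Pi.smul_apply, smul_eq_mul, mul_pow, hξ, h1, one_mul]))

lemma prod4_rel {x y : V} (h : rel x y) : prod4 y = prod4 x := by
  obtain ⟨ξ, hξ, rfl⟩ := h
  simp only [prod4, Pi.smul_apply, smul_eq_mul, Finset.prod_mul_distrib,
    Finset.prod_const, Finset.card_univ, Fintype.card_fin, hξ, one_mul]

lemma sum_ite_pair (f : Fin 4 → ℂ) {j1 j2 : Fin 4} (h : j1 ≠ j2) (u v : ℂ) :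
    ∑ j, f j * (if j = j1 then u else if j = j2 then v else 0) = f j1 * u + f j2 * v := by
  rw [← Finset.sum_subset (Finset.subset_univ ({j1, j2} : Finset (Fin 4)))]
  · rw [Finset.sum_pair h]
    simp [h, h.symm]
  · intro j _ hj
    simp only [Finset.mem_insert, Finset.mem_singleton, not_or] at hj
    simp [hj.1, hj.2]

lemma pair_rel {a b d : V} {k : Fin 4} (ha0 : ∀ j, j ≠ k → a j = 0)
    (hd : Xa a ∩ Xa b ⊆ Xa d) {j1 j2 : Fin 4}
    (h1 : j1 ≠ k) (h2 : j2 ≠ k) : d j1 * b j2 = d j2 * b j1 := by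
  by_cases he : j1 = j2
  · subst he; rfl
  · set x : V := fun j => if j = j1 then b j2 else if j = j2 then -(b j1) else 0 with hx
    have hxa : x ∈ Xa a := by
      apply Finset.sum_eq_zero
      intro j _
      by_cases hj : j = k
      · subst hj
        rw [hx]
        simp [Ne.symm h1, Ne.symm h2]
      · rw [ha0 j hj, zero_mul]
    have hxb : x ∈ Xa b := by
      show ∑ j, b j * x j = 0
      rw [hx, sum_ite_pair b he]
      ring
    have hxd : ∑ j, d j * x j = 0 := hd ⟨hxa, hxb⟩
    rw [hx, sum_ite_pair d he] at hxd
    linear_combination hxd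

lemma prod4_update (b : V) (k : Fin 4) (v : ℂ) :
    prod4 (Function.update b k v) * b k = v * prod4 b := by
  unfold prod4
  rw [Finset.prod_update_of_mem (Finset.mem_univ k),
    ← Finset.mul_prod_erase Finset.univ b (Finset.mem_univ k), Finset.erase_eq]
  ring

lemma ncard_univ4 : (Set.univ : Set (Fin 4)).ncard = 4 := by
  rw [Set.ncard_univ]; simp

/-- let `[a] ∈ Λ₁` with `Supp a = {k}` and `[b] ∈ Λ₃`.  Then `mult(a,b) = 3` and
`Λ(a,b)` consists of exactly one class `[c] ∈ Λ₃`, where `cⱼ = bⱼ` for `j ≠ k` and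
`cₖ = −bₖ`. -/
theorem stmt4 : ∀ A ∈ Lambda1, ∀ B ∈ Lambda3, ∀ a b : V, ∀ k : Fin 4,
    cls a = A → cls b = B → Supp a = {k} →
    mult A B = 3 ∧
    LambdaAB A B = {cls (Function.update b k (-(b k)))} ∧
    cls (Function.update b k (-(b k))) ∈ Lambda3 := by
  intro A hA B hB a b k hclsa hclsb hSa
  -- properties of a
  obtain ⟨a1, ha1A, ha1Psi, ha1S⟩ := hA
  have hrel_a : rel a1 a := Quotient.exact (ha1A.trans hclsa.symm)
  have haPsi : PsiV a := PsiV_rel hrel_a ha1Psi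
  have hak : a k ≠ 0 := by
    have hk : k ∈ Supp a := by rw [hSa]; rfl
    exact hk
  have ha0 : ∀ j, j ≠ k → a j = 0 := by
    intro j hj
    by_contra h
    have hmem : j ∈ Supp a := h
    rw [hSa] at hmem
    exact hj hmem
  -- properties of b
  obtain ⟨b1, hb1B, hb1Psi, hb1S, hb1P⟩ := hB
  have hrel_b : rel b1 b := Quotient.exact (hb1B.trans hclsb.symm)
  have hbPsi : PsiV b := PsiV_rel hrel_b hb1Psi
  have hSb : Supp b = Set.univ := by
    rw [Supp_rel hrel_b]
    exact Set.eq_of_subset_of_ncard_le (Set.subset_univ _)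
      (by rw [ncard_univ4, hb1S]) (Set.finite_univ)
  have hbne : ∀ j, b j ≠ 0 := fun j => hSb.ge (Set.mem_univ j)
  have hbP : prod4 b = 1 ∨ prod4 b = -1 := by rw [prod4_rel hrel_b]; exact hb1P
  -- the new vector c
  set c := Function.update b k (-(b k)) with hcdef
  have hck : c k = -(b k) := Function.update_self k _ b
  have hcj : ∀ j, j ≠ k → c j = b j := fun j hj => Function.update_of_ne hj _ b
  have hcne : ∀ j, c j ≠ 0 := by
    intro j
    by_cases hj : j = k
    · rw [hj, hck]; exact neg_ne_zero.mpr (hbne k)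
    · rw [hcj j hj]; exact hbne j
  have hbk4 : (b k) ^ 4 = 1 := (mem_Psi.mp (hbPsi k)).resolve_left (hbne k)
  have hcPsi : PsiV c := by
    intro j
    by_cases hj : j = k
    · rw [hj, hck]
      exact mem_Psi.mpr (Or.inr (by rw [show (-(b k)) ^ 4 = (b k) ^ 4 from by ring, hbk4]))
    · rw [hcj j hj]; exact hbPsi j
  have hcS : Supp c = Set.univ := Set.eq_univ_of_forall hcne
  have hcp : prod4 c = - prod4 b :=
    mul_right_cancel₀ (hbne k) ((prod4_update b k (-(b k))).trans (by ring))
  have hcL3 : cls c ∈ Lambda3 := by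
    refine ⟨c, rfl, hcPsi, by rw [hcS, ncard_univ4], ?_⟩
    rcases hbP with h | h
    · right; rw [hcp, h]
    · left; rw [hcp, h]; ring
  -- index arithmetic
  have hne3 : ∀ j : Fin 4, j ≠ 0 → k + j ≠ k := by
    intro j hj h
    exact hj (add_left_cancel (h.trans (add_zero k).symm))
  have hadd : ∀ j1 j2 : Fin 4, j1 ≠ j2 → k + j1 ≠ k + j2 := by
    intro j1 j2 hj h
    exact hj (add_left_cancel h)
  -- distinctness
  have hAB : A ≠ B := by
    intro h
    have hs : Supp b = Supp a := Supp_rel (Quotient.exact (hclsa.trans (h.trans hclsb.symm)))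
    rw [hSa, hSb] at hs
    exact hne3 1 (by decide) (hs.le (Set.mem_univ (k + 1)))
  have hAC : A ≠ cls c := by
    intro h
    have hs : Supp c = Supp a := Supp_rel (Quotient.exact (hclsa.trans h))
    rw [hSa, hcS] at hs
    exact hne3 1 (by decide) (hs.le (Set.mem_univ (k + 1)))
  have hBC : B ≠ cls c := by
    intro h
    obtain ⟨ξ, hξ, hsc⟩ := (Quotient.exact (hclsb.trans h) : rel b c)
    have h1 : c (k + 1) = ξ * b (k + 1) := congrFun hsc (k + 1)
    rw [hcj _ (hne3 1 (by decide))] at h1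
    have hξ1 : ξ = 1 := by
      have := mul_right_cancel₀ (hbne (k + 1)) (h1.symm.trans (one_mul (b (k + 1))).symm)
      exact this
    have h2 : c k = ξ * b k := congrFun hsc k
    rw [hck, hξ1, one_mul] at h2
    exact hbne k (by linear_combination (-1/2 : ℂ) * h2)
  -- containment for c
  have hXab : Xa a ∩ Xa b ⊆ Xa c := by
    intro x hx
    have hxa : ∑ j, a j * x j = 0 := hx.1
    have hxk : x k = 0 := by
      rw [Finset.sum_eq_single k (fun j _ hj => by rw [ha0 j hj, zero_mul])
        (fun h => absurd (Finset.mem_univ k) h)] at hxa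
      exact (mul_eq_zero.mp hxa).resolve_left hak
    have hxb : ∑ j, b j * x j = 0 := hx.2
    show ∑ j, c j * x j = 0
    have hdiff : ∑ j, (c j * x j - b j * x j) = (c k - b k) * x k := by
      rw [Finset.sum_eq_single k (fun j _ hj => by rw [hcj j hj]; ring)
        (fun h => absurd (Finset.mem_univ k) h)]
      ring
    rw [Finset.sum_sub_distrib] at hdiff
    rw [hxk, mul_zero] at hdiff
    linear_combination hdiff + hxb
  -- the main set computation
  have hHat : LambdaHat A B = {A, B, cls c} := by
    ext D
    simp only [Set.mem_insert_iff, Set.mem_singleton_iff]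
    constructor
    · rintro ⟨hDL, xa, xb, d, hxaA, hxbB, rfl, hsub⟩
      rw [Xa_rel (Quotient.exact (hclsa.trans hxaA.symm) : rel a xa),
        Xa_rel (Quotient.exact (hclsb.trans hxbB.symm) : rel b xb)] at hsub
      have hpair : ∀ {j1 j2 : Fin 4}, j1 ≠ k → j2 ≠ k → d j1 * b j2 = d j2 * b j1 :=
        fun h1 h2 => pair_rel ha0 hsub h1 h2
      have hj0 : k + 1 ≠ k := hne3 1 (by decide)
      by_cases hβ0 : d (k + 1) = 0
      · -- d vanishes off k; D must be A
        have hd0 : ∀ j, j ≠ k → d j = 0 := by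
          intro j hj
          have hp := hpair hj hj0
          rw [hβ0, zero_mul] at hp
          exact (mul_eq_zero.mp hp).resolve_right (hbne (k + 1))
        have hSd : Supp d ⊆ {k} := by
          intro j hj
          by_contra h
          exact hj (hd0 j h)
        have hle1 : (Supp d).ncard ≤ 1 := by
          have := Set.ncard_le_ncard hSd (Set.finite_singleton k)
          rwa [Set.ncard_singleton] at this
        rcases hDL with (hD1 | hD2) | hD3
        · obtain ⟨e, heD, hePsi, heS⟩ := hD1
          have hrel_e : rel e d := Quotient.exact heD
          have hdPsi : PsiV d := PsiV_rel hrel_e hePsi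
          have hSdk : Supp d = {k} := by
            apply Set.eq_of_subset_of_ncard_le hSd _ (Set.finite_singleton k)
            rw [Set.ncard_singleton, Supp_rel hrel_e, heS]
          have hdk : d k ≠ 0 := hSdk.ge rfl
          have hdk4 : (d k) ^ 4 = 1 := (mem_Psi.mp (hdPsi k)).resolve_left hdk
          have hak4 : (a k) ^ 4 = 1 := (mem_Psi.mp (haPsi k)).resolve_left hak
          left
          refine ((Quotient.sound ⟨d k * (a k)⁻¹, ?_, ?_⟩ : cls a = cls d)).symm.trans hclsa
          · rw [mul_pow, inv_pow, hdk4, hak4]; norm_num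
          · funext j
            by_cases hj : j = k
            · subst hj
              show d j = d j * (a j)⁻¹ * a j
              field_simp
            · rw [hd0 j hj]
              show (0 : ℂ) = d k * (a k)⁻¹ * a j
              rw [ha0 j hj, mul_zero]
        · obtain ⟨e, heD, _, heS⟩ := hD2
          rw [Supp_rel (Quotient.exact heD : rel e d), heS] at hle1
          omega
        · obtain ⟨e, heD, _, heS, _⟩ := hD3
          rw [Supp_rel (Quotient.exact heD : rel e d), heS] at hle1
          omega
      · -- d nonzero off k; D must be B or cls c
        have hd3 : ∀ j, j ≠ k → d j ≠ 0 := by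
          intro j hj h0
          have hp := hpair hj0 hj
          rw [h0, zero_mul] at hp
          exact hβ0 ((mul_eq_zero.mp hp).resolve_right (hbne j))
        have hge3 : 3 ≤ (Supp d).ncard := by
          have h12 : (k + 1 : Fin 4) ≠ k + 2 := hadd 1 2 (by decide)
          have h13 : (k + 1 : Fin 4) ≠ k + 3 := hadd 1 3 (by decide)
          have h23 : (k + 2 : Fin 4) ≠ k + 3 := hadd 2 3 (by decide)
          have h3 : ({k + 1, k + 2, k + 3} : Set (Fin 4)).ncard = 3 :=
            Set.ncard_eq_three.mpr ⟨_, _, _, h12, h13, h23, rfl⟩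
          rw [← h3]
          apply Set.ncard_le_ncard _ (Set.toFinite _)
          intro j hj
          rcases hj with rfl | rfl | rfl
          · exact hd3 _ (hne3 1 (by decide))
          · exact hd3 _ (hne3 2 (by decide))
          · exact hd3 _ (hne3 3 (by decide))
        rcases hDL with (hD1 | hD2) | hD3
        · obtain ⟨e, heD, _, heS⟩ := hD1
          rw [Supp_rel (Quotient.exact heD : rel e d), heS] at hge3
          omega
        · obtain ⟨e, heD, _, heS⟩ := hD2
          rw [Supp_rel (Quotient.exact heD : rel e d), heS] at hge3
          omega
        · obtain ⟨e, heD, hePsi, heS, heP⟩ := hD3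
          have hrel_e : rel e d := Quotient.exact heD
          have hdPsi : PsiV d := PsiV_rel hrel_e hePsi
          have hSd : Supp d = Set.univ := by
            rw [Supp_rel hrel_e]
            exact Set.eq_of_subset_of_ncard_le (Set.subset_univ _)
              (by rw [ncard_univ4, heS]) Set.finite_univ
          have hdP : prod4 d = 1 ∨ prod4 d = -1 := by rw [prod4_rel hrel_e]; exact heP
          have hdj0 : d (k + 1) ≠ 0 := hβ0
          set β := d (k + 1) * (b (k + 1))⁻¹ with hβdef
          have hbj04 : (b (k + 1)) ^ 4 = 1 :=
            (mem_Psi.mp (hbPsi (k + 1))).resolve_left (hbne (k + 1))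
          have hdj04 : (d (k + 1)) ^ 4 = 1 :=
            (mem_Psi.mp (hdPsi (k + 1))).resolve_left hdj0
          have hβ4 : β ^ 4 = 1 := by
            rw [hβdef, mul_pow, inv_pow, hdj04, hbj04]; norm_num
          have hβne : β ≠ 0 := mu4_ne_zero hβ4
          set d' : V := β⁻¹ • d with hd'def
          have hrel_dd' : rel d d' := ⟨β⁻¹, by rw [inv_pow, hβ4]; norm_num, rfl⟩
          have hd'j : ∀ j, j ≠ k → d' j = b j := by
            intro j hj
            show β⁻¹ * d j = b j
            have hp := hpair hj hj0
            rw [hβdef]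
            field_simp
            linear_combination hp
          have hP : prod4 b = b k * ∏ j ∈ Finset.univ.erase k, b j :=
            (Finset.mul_prod_erase Finset.univ b (Finset.mem_univ k)).symm
          have hPd' : prod4 d' = d' k * ∏ j ∈ Finset.univ.erase k, b j := by
            rw [show prod4 d' = d' k * ∏ j ∈ Finset.univ.erase k, d' j from
              (Finset.mul_prod_erase Finset.univ d' (Finset.mem_univ k)).symm]
            congr 1
            exact Finset.prod_congr rfl (fun j hj => hd'j j (Finset.ne_of_mem_erase hj))
          have hPne : (∏ j ∈ Finset.univ.erase k, b j) ≠ 0 :=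
            Finset.prod_ne_zero_iff.mpr (fun j _ => hbne j)
          have hd'P : prod4 d' = 1 ∨ prod4 d' = -1 := by
            rw [prod4_rel hrel_dd']; exact hdP
          have hkey : d' k = b k ∨ d' k = -(b k) := by
            rw [hPd'] at hd'P
            rw [hP] at hbP
            rcases hd'P with e1 | e1 <;> rcases hbP with e2 | e2
            · left; exact mul_right_cancel₀ hPne (e1.trans e2.symm)
            · right
              apply mul_right_cancel₀ hPne
              rw [neg_mul]
              linear_combination e1 + e2
            · right
              apply mul_right_cancel₀ hPne
              rw [neg_mul]
              linear_combination e1 + e2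
            · left; exact mul_right_cancel₀ hPne (e1.trans e2.symm)
          have hclsd : cls d = cls d' := Quotient.sound hrel_dd'
          rcases hkey with hk' | hk'
          · right; left
            have hd'b : d' = b := by
              funext j
              by_cases hj : j = k
              · subst hj; exact hk'
              · exact hd'j j hj
            rw [hclsd, hd'b, hclsb]
          · right; right
            have hd'c : d' = c := by
              funext j
              by_cases hj : j = k
              · subst hj; rw [hk', hck]
              · rw [hd'j j hj, hcj j hj]
            rw [hclsd, hd'c]
    · rintro (rfl | rfl | rfl)
      · exact ⟨Or.inl (Or.inl ⟨a1, ha1A, ha1Psi, ha1S⟩),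
          a, b, a, hclsa, hclsb, hclsa, Set.inter_subset_left⟩
      · exact ⟨Or.inr ⟨b1, hb1B, hb1Psi, hb1S, hb1P⟩,
          a, b, b, hclsa, hclsb, hclsb, Set.inter_subset_right⟩
      · exact ⟨Or.inr hcL3, a, b, c, hclsa, hclsb, rfl, hXab⟩
  refine ⟨?_, ?_, hcL3⟩
  · rw [mult, hHat]
    exact Set.ncard_eq_three.mpr ⟨A, B, cls c, hAB, hAC, hBC, rfl⟩
  · rw [LambdaAB, hHat]
    ext D
    simp only [Set.mem_diff, Set.mem_insert_iff, Set.mem_singleton_iff, not_or]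
    constructor
    · rintro ⟨h1 | h1 | h1, h2, h3⟩
      · exact absurd h1 h2
      · exact absurd h1 h3
      · exact h1
    · rintro rfl
      exact ⟨Or.inr (Or.inr rfl), fun h => hAC h.symm, fun h => hBC h.symm⟩


end G31
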